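/- If (M,P,g) is a W̄₃-manifold of dimension 2n with closed 1-form θ, then the Riemannian P-tensor K(x,y,z,w) = (1/2){R(x,y,z,w) + R(x,y,Pz,Pw)} equals R - (1/4n){(ψ₁-ψ₂)(A) + (θ(Ω)/2n)(π₁-π₂)}, where A(y,z) = (∇_y θ)z - (1/2n)θ(y)θ(z). -/

import Mathlib

open scoped BigOperators

/-- An abstract (local) model of a Riemannian almost product manifold of
dimension `n`: `V` plays the role of the module of smooth vector fields over
the commutative ℝ-algebra `C` of smooth functions, `g` is the Riemannian
metric, `P` the almost product structure, `D` the directional derivative of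
functions, `bracket` the Lie bracket of vector fields, `nabla` the
Levi-Civita connection of `g`, and `e`, `e'` a frame together with its
`g`-reciprocal frame (used to form traces `g^{ij}·`). -/
structure RAPM (n : ℕ) where
  V : Type
  C : Type
  [instAG : AddCommGroup V]
  [instCR : CommRing C]
  [instAlg : Algebra ℝ C]
  [instMod : Module C V]
  g : V →ₗ[C] V →ₗ[C] C
  P : V →ₗ[C] V
  gSymm : ∀ x y, g x y = g y x
  Pinvol : ∀ x, P (P x) = x
  Piso : ∀ x y, g (P x) (P y) = g x y
  D : V → C → C
  Dadd : ∀ x f h, D x (f + h) = D x f + D x h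
  bracket : V → V → V
  bracketD : ∀ x y f, D (bracket x y) f = D x (D y f) - D y (D x f)
  jacobi : ∀ x y z,
    bracket x (bracket y z) + bracket y (bracket z x) + bracket z (bracket x y) = 0
  nabla : V → V → V
  nabla_add₁ : ∀ x y z, nabla (x + y) z = nabla x z + nabla y z
  nabla_smul₁ : ∀ (f : C) x y, nabla (f • x) y = f • nabla x y
  nabla_add₂ : ∀ x y z, nabla x (y + z) = nabla x y + nabla x z
  nabla_leibniz : ∀ x (f : C) y, nabla x (f • y) = D x f • y + f • nabla x y
  nabla_metric : ∀ x y z, D x (g y z) = g (nabla x y) z + g y (nabla x z)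
  torsion_free : ∀ x y, nabla x y - nabla y x = bracket x y
  e : Fin n → V
  e' : Fin n → V
  dual_frame : ∀ i j, g (e' i) (e j) = if i = j then 1 else 0
  frame_span : ∀ v : V, v = ∑ i, g (e' i) v • e i

namespace RAPM

attribute [instance] RAPM.instAG RAPM.instCR RAPM.instAlg RAPM.instMod

variable {n : ℕ} (Q : RAPM n)

/-- The fundamental tensor `F(x,y,z) = g((∇ₓP)y, z)`. -/
def F (x y z : Q.V) : Q.C := Q.g (Q.nabla x (Q.P y) - Q.P (Q.nabla x y)) z

/-- The curvature operator `R(x,y)z`. -/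
def R (x y z : Q.V) : Q.V :=
  Q.nabla x (Q.nabla y z) - Q.nabla y (Q.nabla x z) - Q.nabla (Q.bracket x y) z

/-- The (0,4) curvature tensor `R(x,y,z,w) = g(R(x,y)z, w)`. -/
def Rm (x y z w : Q.V) : Q.C := Q.g (Q.R x y z) w

/-- `tr P = g^{ij} g(e_i, P e_j)`. -/
def trP : Q.C := ∑ i, Q.g (Q.e' i) (Q.P (Q.e i))

/-- The Lee form `θ(x) = g^{ij} F(e_i, e_j, x)`. -/
def theta (x : Q.V) : Q.C := ∑ i, Q.F (Q.e' i) (Q.e i) x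

/-- The covariant derivative `(∇ₓθ)y`. -/
def nablaTheta (x y : Q.V) : Q.C := Q.D x (Q.theta y) - Q.theta (Q.nabla x y)

/-- `θ` is closed iff `(∇ₓθ)y = (∇_yθ)x`. -/
def closed : Prop := ∀ x y, Q.nablaTheta x y = Q.nablaTheta y x

/-- The covariant derivative `(∇ₓF)(y,z,w)`. -/
def nablaF (x y z w : Q.V) : Q.C :=
  Q.D x (Q.F y z w) - Q.F (Q.nabla x y) z w - Q.F y (Q.nabla x z) w
    - Q.F y z (Q.nabla x w)

def psi1 (S : Q.V → Q.V → Q.C) (x y z w : Q.V) : Q.C :=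
  Q.g y z * S x w - Q.g x z * S y w + S y z * Q.g x w - S x z * Q.g y w

def psi2 (S : Q.V → Q.V → Q.C) (x y z w : Q.V) : Q.C :=
  Q.psi1 S x y (Q.P z) (Q.P w)

/-- The associated metric `g̃(x,y) = g(x,Py)`. -/
def gP (x y : Q.V) : Q.C := Q.g x (Q.P y)

noncomputable def pi1 (x y z w : Q.V) : Q.C :=
  ((1 : ℝ)/2) • Q.psi1 (fun a b => Q.g a b) x y z w

noncomputable def pi2 (x y z w : Q.V) : Q.C :=
  ((1 : ℝ)/2) • Q.psi2 (fun a b => Q.g a b) x y z w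

def pi3 (x y z w : Q.V) : Q.C := Q.psi1 Q.gP x y z w

/-- The Ricci tensor `ρ(L)(y,z) = g^{ij} L(e_i,y,z,e_j)` of a (0,4)-tensor. -/
def ric (L : Q.V → Q.V → Q.V → Q.V → Q.C) (y z : Q.V) : Q.C :=
  ∑ i, L (Q.e' i) y z (Q.e i)

/-- The scalar curvature `τ(L) = g^{ij} ρ(L)(e_i,e_j)`. -/
def scal (L : Q.V → Q.V → Q.V → Q.V → Q.C) : Q.C := ∑ i, Q.ric L (Q.e i) (Q.e' i)

/-- The associated Ricci tensor `ρ*(L)(y,z) = g^{ij} L(e_i,y,z,Pe_j)`. -/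
def ricStar (L : Q.V → Q.V → Q.V → Q.V → Q.C) (y z : Q.V) : Q.C :=
  ∑ i, L (Q.e' i) y z (Q.P (Q.e i))

/-- The associated scalar curvature `τ*(L)`. -/
def scalStar (L : Q.V → Q.V → Q.V → Q.V → Q.C) : Q.C :=
  ∑ i, Q.ricStar L (Q.e i) (Q.e' i)

/-- The trace `g^{ij} S(e_i,e_j)` of a (0,2)-tensor. -/
def trB (S : Q.V → Q.V → Q.C) : Q.C := ∑ i, S (Q.e i) (Q.e' i)

/-- The divergence of a vector field. -/
def divg (v : Q.V) : Q.C := ∑ i, Q.g (Q.e' i) (Q.nabla (Q.e i) v)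

/-- A curvature-like tensor. -/
def curvatureLike (L : Q.V → Q.V → Q.V → Q.V → Q.C) : Prop :=
  (∀ x y z w, L x y z w = - L y x z w) ∧
  (∀ x y z w, L x y z w = - L x y w z) ∧
  (∀ x y z w, L x y z w + L y z x w + L z x y w = 0)

/-- A Riemannian P-tensor. -/
def isPtensor (L : Q.V → Q.V → Q.V → Q.V → Q.C) : Prop :=
  Q.curvatureLike L ∧ ∀ x y z w, L x y (Q.P z) (Q.P w) = L x y z w

/-- The defining condition of the Naveira class `W̄₃` (dimension `n`, so the
factor `1/(2n)` of the paper is `1/n` here). -/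
def W3 : Prop :=
  (∀ x y z, Q.F x y z =
    ((1 : ℝ)/(n : ℝ)) • ((Q.g x y + Q.g x (Q.P y)) * Q.theta z +
      (Q.g x z + Q.g x (Q.P z)) * Q.theta y)) ∧
  (∀ x, Q.theta (Q.P x) = - Q.theta x)

/-- The defining condition of the Naveira class `W̄₆`. -/
def W6 : Prop :=
  (∀ x y z, Q.F x y z =
    ((1 : ℝ)/(n : ℝ)) • ((Q.g x y - Q.g x (Q.P y)) * Q.theta z +
      (Q.g x z - Q.g x (Q.P z)) * Q.theta y)) ∧
  (∀ x, Q.theta (Q.P x) = Q.theta x)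

end RAPM

/-!
In class `W̄₃` the fundamental tensor `F = g((∇P)·,·)` is an explicit expression in `g`, `P` and
the Lee form `θ`, so `∇F` is an expression in `θ` and `∇θ`. The Ricci-type identity
`R(x,y,Pz,Pw) - R(x,y,z,w) = (∇ₓF)(y,z,Pw) - (∇_yF)(x,z,Pw)` then expresses the
`P`-anti-invariant part of `R` through `A` and `θ(Ω)`, and `K` is the average of `R` and
`R(·,·,P·,P·)`. The Bianchi identity of `K` follows because `ψ₁(A)`, `ψ₂(A)`, `π₁`, `π₂` are
curvature-like: `A` is symmetric since `θ` is closed, and `A(·,P·)` is symmetric since, in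
addition, `(∇θ)(·,P·)` differs from `-∇θ` by a multiple of `g + g(·,P·)`.
-/

namespace RAPM

variable {m : ℕ} (Q : RAPM m)

lemma nabla_sub_left (a b v : Q.V) : Q.nabla (a - b) v = Q.nabla a v - Q.nabla b v :=
  (AddMonoidHom.mk' (Q.nabla · v) fun a b => Q.nabla_add₁ a b v).map_sub a b

lemma nabla_neg_left (a v : Q.V) : Q.nabla (-a) v = -Q.nabla a v :=
  (AddMonoidHom.mk' (Q.nabla · v) fun a b => Q.nabla_add₁ a b v).map_neg a

lemma nabla_sub_right (x a b : Q.V) : Q.nabla x (a - b) = Q.nabla x a - Q.nabla x b :=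
  (AddMonoidHom.mk' (Q.nabla x) (Q.nabla_add₂ x)).map_sub a b

lemma D_zero (x : Q.V) : Q.D x 0 = 0 :=
  (AddMonoidHom.mk' (Q.D x) (Q.Dadd x)).map_zero

lemma D_neg (x : Q.V) (f : Q.C) : Q.D x (-f) = -Q.D x f :=
  (AddMonoidHom.mk' (Q.D x) (Q.Dadd x)).map_neg f

lemma D_nsmul (x : Q.V) (p : ℕ) (f : Q.C) : Q.D x (p • f) = p • Q.D x f :=
  (AddMonoidHom.mk' (Q.D x) (Q.Dadd x)).map_nsmul p f

/-- `D x` is only assumed additive, which suffices for the rational scalar `1/p`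
(with `1/0 = 0`). -/
lemma D_one_div_natCast_smul (x : Q.V) (p : ℕ) (f : Q.C) :
    Q.D x (((1 : ℝ) / p) • f) = ((1 : ℝ) / p) • Q.D x f := by
  rcases Nat.eq_zero_or_pos p with rfl | hp
  · simp [D_zero]
  have hp' : (p : ℝ) ≠ 0 := by positivity
  have hf : f = p • ((1 : ℝ) / p) • f := by
    rw [← Nat.cast_smul_eq_nsmul ℝ, smul_smul, mul_one_div_cancel hp', one_smul]
  conv_rhs => rw [hf, Q.D_nsmul, ← Nat.cast_smul_eq_nsmul ℝ, smul_smul,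
    one_div_mul_cancel hp', one_smul]

lemma D_mul_metric (x : Q.V) (f : Q.C) (a b : Q.V) :
    Q.D x (f * Q.g a b) = Q.D x f * Q.g a b + f * Q.D x (Q.g a b) := by
  have h := Q.nabla_metric x (f • a) b
  simp only [Q.nabla_leibniz, map_smul, map_add, LinearMap.smul_apply, LinearMap.add_apply,
    smul_eq_mul] at h
  rw [h, Q.nabla_metric x a b]
  ring

lemma bracket_swap (x y : Q.V) : Q.bracket y x = -Q.bracket x y := by
  rw [← Q.torsion_free, ← Q.torsion_free]
  abel

lemma R_swap (x y z : Q.V) : Q.R y x z = -Q.R x y z := by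
  rw [R, R, Q.bracket_swap, Q.nabla_neg_left]
  abel

lemma Rm_antisymm_left (x y z w : Q.V) : Q.Rm x y z w = -Q.Rm y x z w := by
  rw [Rm, Rm, Q.R_swap, map_neg, LinearMap.neg_apply]

/-- Metric compatibility makes `R(x,y)` skew-adjoint: expand `[x,y](g z w)` in two ways. -/
lemma Rm_antisymm_right (x y z w : Q.V) : Q.Rm x y z w = -Q.Rm x y w z := by
  have hxy := Q.bracketD x y (Q.g z w)
  simp only [Q.nabla_metric, Q.Dadd] at hxy
  simp only [Rm, R, map_sub, LinearMap.sub_apply]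
  linear_combination -hxy - Q.gSymm z (Q.nabla x (Q.nabla y w))
    + Q.gSymm z (Q.nabla y (Q.nabla x w)) + Q.gSymm z (Q.nabla (Q.bracket x y) w)

lemma R_bianchi (x y z : Q.V) : Q.R x y z + Q.R y z x + Q.R z x y = 0 := by
  rw [← Q.jacobi x y z]
  simp only [R, ← Q.torsion_free, Q.nabla_sub_left, Q.nabla_sub_right]
  abel

lemma curvatureLike_Rm : Q.curvatureLike Q.Rm := by
  refine ⟨Q.Rm_antisymm_left, Q.Rm_antisymm_right, fun x y z w => ?_⟩
  simp only [Rm, ← LinearMap.add_apply, ← map_add, Q.R_bianchi, map_zero, LinearMap.zero_apply]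

/-- Antisymmetrising the second covariant derivative of `P` gives the commutator `[R(x,y), P]`. -/
lemma Rm_P_sub_Rm (x y z w : Q.V) :
    Q.Rm x y (Q.P z) (Q.P w) - Q.Rm x y z w =
      Q.nablaF x y z (Q.P w) - Q.nablaF y x z (Q.P w) := by
  set NP : Q.V → Q.V → Q.V := fun a b => Q.nabla a (Q.P b) - Q.P (Q.nabla a b) with hNP
  have hnablaF : ∀ a b, Q.nablaF a b z (Q.P w) =
      Q.g (Q.nabla a (NP b z) - NP (Q.nabla a b) z - NP b (Q.nabla a z)) (Q.P w) := by
    intro a b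
    have hF : ∀ u v s, Q.F u v s = Q.g (NP u v) s := fun _ _ _ => rfl
    rw [nablaF, hF, hF, hF, hF, Q.nabla_metric a (NP b z)]
    simp only [map_sub, LinearMap.sub_apply]
    ring
  have hcomm : Q.nabla x (NP y z) - NP (Q.nabla x y) z - NP y (Q.nabla x z) -
      (Q.nabla y (NP x z) - NP (Q.nabla y x) z - NP x (Q.nabla y z)) =
      Q.R x y (Q.P z) - Q.P (Q.R x y z) := by
    simp only [R, hNP, ← Q.torsion_free x y, Q.nabla_sub_left, Q.nabla_sub_right, map_sub]
    abel
  have h := congrArg (Q.g · (Q.P w)) hcomm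
  simp only [map_sub, LinearMap.sub_apply] at h
  rw [hnablaF, hnablaF, Rm, Rm, ← Q.Piso (Q.R x y z), ← h]
  simp only [map_sub, LinearMap.sub_apply]

lemma g_P_comm (u v : Q.V) : Q.g u (Q.P v) = Q.g v (Q.P u) := by
  rw [← Q.Piso u (Q.P v), Q.Pinvol, Q.gSymm]

section CurvatureLike

variable {Q}
variable {L L' : Q.V → Q.V → Q.V → Q.V → Q.C}

lemma curvatureLike.congr (h : Q.curvatureLike L) (hL : ∀ x y z w, L' x y z w = L x y z w) :
    Q.curvatureLike L' := by
  obtain rfl : L' = L := by ext x y z w; exact hL x y z w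
  exact h

lemma curvatureLike.add (h : Q.curvatureLike L) (h' : Q.curvatureLike L') :
    Q.curvatureLike fun x y z w => L x y z w + L' x y z w := by
  refine ⟨fun x y z w => ?_, fun x y z w => ?_, fun x y z w => ?_⟩
  · linear_combination h.1 x y z w + h'.1 x y z w
  · linear_combination h.2.1 x y z w + h'.2.1 x y z w
  · linear_combination h.2.2 x y z w + h'.2.2 x y z w

lemma curvatureLike.sub (h : Q.curvatureLike L) (h' : Q.curvatureLike L') :
    Q.curvatureLike fun x y z w => L x y z w - L' x y z w := by
  refine ⟨fun x y z w => ?_, fun x y z w => ?_, fun x y z w => ?_⟩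
  · linear_combination h.1 x y z w - h'.1 x y z w
  · linear_combination h.2.1 x y z w - h'.2.1 x y z w
  · linear_combination h.2.2 x y z w - h'.2.2 x y z w

lemma curvatureLike.const_mul (h : Q.curvatureLike L) (f : Q.C) :
    Q.curvatureLike fun x y z w => f * L x y z w := by
  refine ⟨fun x y z w => ?_, fun x y z w => ?_, fun x y z w => ?_⟩
  · linear_combination f * h.1 x y z w
  · linear_combination f * h.2.1 x y z w
  · linear_combination f * h.2.2 x y z w

lemma curvatureLike.smul (h : Q.curvatureLike L) (r : ℝ) :
    Q.curvatureLike fun x y z w => r • L x y z w := by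
  simpa only [Algebra.smul_def] using h.const_mul (algebraMap ℝ Q.C r)

end CurvatureLike

lemma curvatureLike_psi1 {S : Q.V → Q.V → Q.C} (hS : ∀ u v, S u v = S v u) :
    Q.curvatureLike (Q.psi1 S) := by
  refine ⟨fun x y z w => ?_, fun x y z w => ?_, fun x y z w => ?_⟩
  · simp only [psi1]; ring
  · simp only [psi1]; ring
  · simp only [psi1]
    linear_combination S x w * Q.gSymm y z + S y w * Q.gSymm z x + S z w * Q.gSymm x y
      + Q.g x w * hS y z + Q.g y w * hS z x + Q.g z w * hS x y

lemma curvatureLike_psi2 {S : Q.V → Q.V → Q.C} (hS : ∀ u v, S u (Q.P v) = S v (Q.P u)) :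
    Q.curvatureLike (Q.psi2 S) := by
  refine ⟨fun x y z w => ?_, fun x y z w => ?_, fun x y z w => ?_⟩
  · simp only [psi2, psi1]; ring
  · simp only [psi2, psi1]; ring
  · simp only [psi2, psi1]
    linear_combination S x (Q.P w) * Q.g_P_comm y z + S y (Q.P w) * Q.g_P_comm z x
      + S z (Q.P w) * Q.g_P_comm x y + Q.g x (Q.P w) * hS y z + Q.g y (Q.P w) * hS z x
      + Q.g z (Q.P w) * hS x y

lemma curvatureLike_pi1 : Q.curvatureLike Q.pi1 :=
  (Q.curvatureLike_psi1 Q.gSymm).smul _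

lemma curvatureLike_pi2 : Q.curvatureLike Q.pi2 :=
  (Q.curvatureLike_psi2 Q.g_P_comm).smul _

lemma pi1_eq (x y z w : Q.V) : Q.pi1 x y z w = Q.g y z * Q.g x w - Q.g x z * Q.g y w := by
  rw [pi1, psi1]
  module

lemma pi2_eq (x y z w : Q.V) :
    Q.pi2 x y z w = Q.g y (Q.P z) * Q.g x (Q.P w) - Q.g x (Q.P z) * Q.g y (Q.P w) := by
  rw [pi2, psi2, psi1]
  module

lemma theta_eq_g (s : Q.V) :
    Q.theta s = Q.g (∑ i, (Q.nabla (Q.e' i) (Q.P (Q.e i)) - Q.P (Q.nabla (Q.e' i) (Q.e i)))) s := by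
  simp only [theta, F, map_sum, LinearMap.sum_apply]

lemma theta_add (a b : Q.V) : Q.theta (a + b) = Q.theta a + Q.theta b := by
  simp only [theta_eq_g, map_add]

lemma D_mul_theta (x : Q.V) (f : Q.C) (s : Q.V) :
    Q.D x (f * Q.theta s) = Q.D x f * Q.theta s + f * Q.D x (Q.theta s) := by
  simp only [theta_eq_g, D_mul_metric]

lemma D_theta (x s : Q.V) : Q.D x (Q.theta s) = Q.nablaTheta x s + Q.theta (Q.nabla x s) := by
  rw [nablaTheta, sub_add_cancel]

lemma g_nabla_P (a b s : Q.V) :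
    Q.g s (Q.nabla a (Q.P b)) = Q.F a b s + Q.g s (Q.P (Q.nabla a b)) := by
  rw [F, Q.gSymm s, Q.gSymm s, map_sub, LinearMap.sub_apply, sub_add_cancel]

/-- The paper's tensor `A`, with the dimension `2n` written `m`. -/
noncomputable def tensorA (y z : Q.V) : Q.C :=
  Q.nablaTheta y z - ((1 : ℝ) / m) • (Q.theta y * Q.theta z)

lemma tensorA_symm (hθ : Q.closed) (u v : Q.V) : Q.tensorA u v = Q.tensorA v u := by
  rw [tensorA, tensorA, hθ u v, mul_comm (Q.theta u)]

section W3

variable {Q} (hW : Q.W3)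
include hW

lemma F_of_W3 (x y z : Q.V) :
    Q.F x y z = algebraMap ℝ Q.C ((1 : ℝ) / m) *
      ((Q.g x y + Q.g x (Q.P y)) * Q.theta z + (Q.g x z + Q.g x (Q.P z)) * Q.theta y) := by
  rw [hW.1, Algebra.smul_def]

lemma nablaF_of_W3 (x y z w : Q.V) :
    Q.nablaF x y z w = algebraMap ℝ Q.C ((1 : ℝ) / m) *
      ((Q.g y z + Q.g y (Q.P z)) * Q.nablaTheta x w + Q.F x z y * Q.theta w +
        (Q.g y w + Q.g y (Q.P w)) * Q.nablaTheta x z + Q.F x w y * Q.theta z) := by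
  rw [nablaF, hW.1 y z w, hW.1 (Q.nabla x y) z w, hW.1 y (Q.nabla x z) w, hW.1 y z (Q.nabla x w),
    Q.D_one_div_natCast_smul]
  simp only [Q.Dadd, Q.D_mul_theta, Q.D_theta, Q.nabla_metric, Q.g_nabla_P, Algebra.smul_def]
  ring

variable {Ω : Q.V} (hΩ : ∀ x, Q.g Ω x = Q.theta x)
include hΩ

lemma theta_nablaP_of_W3 (u v : Q.V) :
    Q.theta (Q.nabla u (Q.P v) - Q.P (Q.nabla u v)) =
      algebraMap ℝ Q.C ((1 : ℝ) / m) * ((Q.g u v + Q.g u (Q.P v)) * Q.theta Ω) := by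
  have hF : Q.theta (Q.nabla u (Q.P v) - Q.P (Q.nabla u v)) = Q.F u v Ω := by
    rw [← hΩ, Q.gSymm]
    rfl
  rw [hF, F_of_W3 hW, Q.gSymm u Ω, hΩ, Q.g_P_comm u Ω, hΩ, hW.2]
  ring

lemma nablaTheta_P_of_W3 (u v : Q.V) :
    Q.nablaTheta u (Q.P v) = -Q.nablaTheta u v -
      algebraMap ℝ Q.C ((1 : ℝ) / m) * ((Q.g u v + Q.g u (Q.P v)) * Q.theta Ω) := by
  have hsplit : Q.nabla u (Q.P v) = (Q.nabla u (Q.P v) - Q.P (Q.nabla u v)) + Q.P (Q.nabla u v) :=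
    (sub_add_cancel _ _).symm
  rw [nablaTheta, nablaTheta, hW.2, Q.D_neg, hsplit, Q.theta_add, theta_nablaP_of_W3 hW hΩ, hW.2]
  ring

lemma tensorA_P_symm (hθ : Q.closed) (u v : Q.V) :
    Q.tensorA u (Q.P v) = Q.tensorA v (Q.P u) := by
  simp only [tensorA, nablaTheta_P_of_W3 hW hΩ, hW.2, Algebra.smul_def]
  linear_combination -hθ u v - (algebraMap ℝ Q.C ((1 : ℝ) / m) * Q.theta Ω) * Q.gSymm u v -
    (algebraMap ℝ Q.C ((1 : ℝ) / m) * Q.theta Ω) * Q.g_P_comm u v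

lemma Rm_P_of_W3 (x y z w : Q.V) :
    Q.Rm x y (Q.P z) (Q.P w) = Q.Rm x y z w - ((1 : ℝ) / m) •
      (Q.psi1 Q.tensorA x y z w - Q.psi2 Q.tensorA x y z w +
        ((1 : ℝ) / m) • (Q.theta Ω * (Q.pi1 x y z w - Q.pi2 x y z w))) := by
  have h := Q.Rm_P_sub_Rm x y z w
  rw [nablaF_of_W3 hW, nablaF_of_W3 hW] at h
  simp only [psi2, psi1, tensorA, pi1_eq, pi2_eq, F_of_W3 hW, Q.Pinvol, hW.2,
    nablaTheta_P_of_W3 hW hΩ, Algebra.smul_def] at h ⊢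
  linear_combination h - (2 * algebraMap ℝ Q.C ((1 : ℝ) / m) ^ 2 * Q.theta z * Q.theta w) *
    (Q.gSymm x y + Q.g_P_comm x y)

end W3

end RAPM

open RAPM in
theorem statement13_general {n : ℕ} (Q : RAPM (2*n))
    (hW : Q.W3) (hθ : Q.closed) (Ω : Q.V) (hΩ : ∀ x, Q.g Ω x = Q.theta x)
    (A : Q.V → Q.V → Q.C)
    (hA : ∀ y z, A y z =
      Q.nablaTheta y z - ((1 : ℝ)/(2*(n : ℝ))) • (Q.theta y * Q.theta z))
    (K : Q.V → Q.V → Q.V → Q.V → Q.C)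
    (hK : ∀ x y z w, K x y z w =
      ((1 : ℝ)/2) • (Q.Rm x y z w + Q.Rm x y (Q.P z) (Q.P w))) :
    Q.isPtensor K ∧
    ∀ x y z w, K x y z w =
      Q.Rm x y z w - ((1 : ℝ)/(4*(n : ℝ))) •
        (Q.psi1 A x y z w - Q.psi2 A x y z w +
          ((1 : ℝ)/(2*(n : ℝ))) •
            (Q.theta Ω * (Q.pi1 x y z w - Q.pi2 x y z w))) := by
  have hc : (1 : ℝ) / (2 * n) = 1 / ((2 * n : ℕ) : ℝ) := by push_cast; rfl
  obtain rfl : A = Q.tensorA := by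
    ext y z
    rw [hA, tensorA, hc]
  have hformula : ∀ x y z w, K x y z w =
      Q.Rm x y z w - ((1 : ℝ)/(4*(n : ℝ))) •
        (Q.psi1 Q.tensorA x y z w - Q.psi2 Q.tensorA x y z w +
          ((1 : ℝ)/(2*(n : ℝ))) • (Q.theta Ω * (Q.pi1 x y z w - Q.pi2 x y z w))) := by
    intro x y z w
    rw [hK, Rm_P_of_W3 hW hΩ, ← hc, show (1 : ℝ) / (4 * n) = 1 / 2 * (1 / (2 * n)) by ring]
    module
  have hψ : Q.curvatureLike fun x y z w => Q.psi1 Q.tensorA x y z w - Q.psi2 Q.tensorA x y z w :=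
    (Q.curvatureLike_psi1 (Q.tensorA_symm hθ)).sub (Q.curvatureLike_psi2 (tensorA_P_symm hW hΩ hθ))
  have hπ := Q.curvatureLike_pi1.sub Q.curvatureLike_pi2
  have hcurv := (Q.curvatureLike_Rm.sub ((hψ.add ((hπ.const_mul _).smul _)).smul _)).congr hformula
  exact ⟨⟨hcurv, fun x y z w => by rw [hK, hK, Q.Pinvol, Q.Pinvol, add_comm]⟩, hformula⟩

open RAPM in
/-- On a `W̄₃`-manifold of dimension `2n` with closed `θ`, the Riemannian
P-tensor `K = (1/2){R + R(·,·,P·,P·)}` equals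
`R - (1/4n){(ψ₁-ψ₂)(A) + (θ(Ω)/2n)(π₁-π₂)}`. -/
theorem statement13 {n : ℕ} (hn : 0 < n) (Q : RAPM (2*n)) (htr : Q.trP = 0)
    (hW : Q.W3) (hθ : Q.closed) (Ω : Q.V) (hΩ : ∀ x, Q.g Ω x = Q.theta x)
    (A : Q.V → Q.V → Q.C)
    (hA : ∀ y z, A y z =
      Q.nablaTheta y z - ((1 : ℝ)/(2*(n : ℝ))) • (Q.theta y * Q.theta z))
    (K : Q.V → Q.V → Q.V → Q.V → Q.C)
    (hK : ∀ x y z w, K x y z w =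
      ((1 : ℝ)/2) • (Q.Rm x y z w + Q.Rm x y (Q.P z) (Q.P w))) :
    Q.isPtensor K ∧
    ∀ x y z w, K x y z w =
      Q.Rm x y z w - ((1 : ℝ)/(4*(n : ℝ))) •
        (Q.psi1 A x y z w - Q.psi2 A x y z w +
          ((1 : ℝ)/(2*(n : ℝ))) •
            (Q.theta Ω * (Q.pi1 x y z w - Q.pi2 x y z w))) :=
  statement13_general Q hW hθ Ω hΩ A hA K hK
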